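/- For every m ≥ 1, the Bernoulli numbers satisfy Glaisher's determinant expression B_m = (−1)^m · m! · det A, where A is the m×m lower Hessenberg matrix over ℚ with entries A_{i,j} = 1/(i−j+2)! for 1 ≤ j ≤ i ≤ m, A_{i,i+1} = 1 for 1 ≤ i ≤ m−1, and A_{i,j} = 0 for j > i+1. -/

import Mathlib

/-!
The vector `b k = B_k / k!` solves the unitriangular Toeplitz system
`∑_{j ≤ i} b j / (i - j + 1)! = δ_{i0}`, which is the coefficientwise form of
`(∑ b k t^k) · (e^t - 1)/t = 1`. By Cramer's rule, `b m` is the determinant of the system matrix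
with its last column replaced by `e₀`; expanding along that column leaves `(-1)^m` times the
minor obtained by deleting the first row and the last column, and that minor is Glaisher's
Hessenberg matrix.
-/

open Finset Matrix PowerSeries Nat

namespace Matrix

theorem det_mul_apply_last_of_mulVec_eq_single {R : Type*} [CommRing R] {n : ℕ}
    (A : Matrix (Fin (n + 1)) (Fin (n + 1)) R) {x : Fin (n + 1) → R}
    (hx : A *ᵥ x = Pi.single 0 1) :
    A.det * x (Fin.last n) = (-1) ^ n * (A.submatrix Fin.succ Fin.castSucc).det := by
  have hcramer : A.det • x = cramer A (Pi.single 0 1) := by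
    rw [← hx, cramer_eq_adjugate_mulVec, mulVec_mulVec, adjugate_mul, smul_mulVec, one_mulVec]
  rw [← smul_eq_mul, ← Pi.smul_apply, hcramer, cramer_apply, det_succ_column _ (Fin.last n),
    Fin.sum_univ_succ, Finset.sum_eq_zero fun i _ => by simp [Fin.succ_ne_zero],
    submatrix_updateCol_succAbove]
  simp [Fin.succAbove_last]

def lowerToeplitz {R : Type*} [Zero R] (a : ℕ → R) (n : ℕ) : Matrix (Fin n) (Fin n) R :=
  of fun i j => if j ≤ i then a (i - j) else 0

theorem det_lowerToeplitz {R : Type*} [CommRing R] (a : ℕ → R) (n : ℕ) :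
    (lowerToeplitz a n).det = a 0 ^ n := by
  have hlower : (lowerToeplitz a n).IsLowerTriangular := fun i j (hij : i < j) =>
    if_neg (not_le.mpr hij)
  rw [det_of_isLowerTriangular _ hlower]
  simp [lowerToeplitz]

theorem lowerToeplitz_mulVec_apply {R : Type*} [CommSemiring R] (a : ℕ → R) {n : ℕ}
    (x : ℕ → R) (i : Fin n) :
    (lowerToeplitz a n *ᵥ fun j => x j) i = ∑ p ∈ antidiagonal (i : ℕ), x p.1 * a p.2 := by
  have hrange : (range n).filter (· ≤ (i : ℕ)) = range (i + 1) := by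
    ext k
    simp only [mem_filter, mem_range]
    omega
  simp only [mulVec, dotProduct, lowerToeplitz, of_apply, ite_mul, zero_mul, Fin.le_def]
  rw [Nat.sum_antidiagonal_eq_sum_range_succ (fun p q => x p * a q),
    Fin.sum_univ_eq_sum_range (fun j => if j ≤ (i : ℕ) then a (i - j) * x j else 0),
    ← sum_filter, hrange]
  simp only [mul_comm]

theorem lowerToeplitz_submatrix_succ_castSucc {R : Type*} [Zero R] (a : ℕ → R) (n : ℕ) :
    (lowerToeplitz a (n + 1)).submatrix Fin.succ Fin.castSucc =
      of fun i j : Fin n =>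
        if (j : ℕ) = i + 1 then a 0 else if (j : ℕ) ≤ i then a (i - j + 1) else 0 := by
  ext i j
  simp only [lowerToeplitz, submatrix_apply, of_apply, Fin.le_def, Fin.val_succ, Fin.val_castSucc]
  split_ifs <;> first | rfl | omega | (congr 1; omega)

end Matrix

theorem PowerSeries.exp_sub_one_eq_X_mul (A : Type*) [CommRing A] [Algebra ℚ A] :
    exp A - 1 = X * mk fun n => algebraMap ℚ A (1 / (n + 1)!) := by
  ext (_ | n)
  · simp
  · simp [coeff_succ_X_mul]

theorem bernoulliPowerSeries_mul_eq_one (A : Type*) [CommRing A] [Algebra ℚ A] :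
    bernoulliPowerSeries A * (mk fun n => algebraMap ℚ A (1 / (n + 1)!)) = 1 := by
  apply X_mul_cancel
  rw [mul_one, mul_left_comm, ← exp_sub_one_eq_X_mul, bernoulliPowerSeries_mul_exp_sub_one]

theorem sum_antidiagonal_bernoulli_div_factorial (n : ℕ) :
    ∑ p ∈ antidiagonal n, bernoulli p.1 / p.1 ! * (1 / (p.2 + 1)!) = if n = 0 then 1 else 0 := by
  simpa [coeff_mul, bernoulliPowerSeries, coeff_one] using
    congrArg (coeff n) (bernoulliPowerSeries_mul_eq_one ℚ)

theorem bernoulli_det_general (m : ℕ) :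
    bernoulli m = (-1 : ℚ) ^ m * (Nat.factorial m : ℚ) *
      Matrix.det (Matrix.of fun i j : Fin m =>
        if (j : ℕ) = (i : ℕ) + 1 then 1
        else if (j : ℕ) ≤ (i : ℕ) then
          (1 : ℚ) / ((Nat.factorial ((i : ℕ) - (j : ℕ) + 2) : ℕ) : ℚ)
        else 0) := by
  have hsystem : lowerToeplitz (fun k => (1 : ℚ) / (k + 1)!) (m + 1) *ᵥ
      (fun j => bernoulli j / (j : ℕ)!) = Pi.single 0 1 := by
    ext i
    rw [lowerToeplitz_mulVec_apply _ fun k => bernoulli k / k !,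
      sum_antidiagonal_bernoulli_div_factorial]
    simp only [Pi.single_apply, Fin.ext_iff, Fin.val_zero]
  have hlast := det_mul_apply_last_of_mulVec_eq_single _ hsystem
  simp only [det_lowerToeplitz, lowerToeplitz_submatrix_succ_castSucc, zero_add, factorial_one,
    cast_one, div_one, one_pow, one_mul, Fin.val_last, add_assoc, Nat.reduceAdd] at hlast
  rw [mul_right_comm, ← hlast]
  field_simp

/-- **Glaisher's determinant expression of Bernoulli numbers.**  For every `m ≥ 1`, the
Bernoulli numbers (with `B_1 = -1/2`, as given by Mathlib's `bernoulli`) satisfy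
`B_m = (-1)^m m! det A`, where `A` is the `m × m` lower Hessenberg matrix over `ℚ` with
entries `A_{i,j} = 1/(i-j+2)!` for `j ≤ i`, `A_{i,i+1} = 1`, and `A_{i,j} = 0`
otherwise. -/
theorem bernoulli_det (m : ℕ) (hm : 1 ≤ m) :
    bernoulli m = (-1 : ℚ) ^ m * (Nat.factorial m : ℚ) *
      Matrix.det (Matrix.of fun i j : Fin m =>
        if (j : ℕ) = (i : ℕ) + 1 then 1
        else if (j : ℕ) ≤ (i : ℕ) then
          (1 : ℚ) / ((Nat.factorial ((i : ℕ) - (j : ℕ) + 2) : ℕ) : ℚ)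
        else 0) :=
  bernoulli_det_general m
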